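/- arXiv:1308.5771 — 9 statements merged into one kernel-verified Lean document; each statement's English description precedes it below -/
import Mathlib

section
/- Let f1, Cy, Cx, θ, λ, ρ, Ȳ, X̄ be real numbers with X̄ ≠ 0 and Cx ≠ 0, and set A = f1·Cy²·(1 − ρ²). Define M : ℝ × ℝ → ℝ by M(q1, q2) = Ȳ²(q1 − 1)² + f1·[ q1²·Ȳ²·(Cy² + θ²Cx²(1 + λ)²/4 − (1 + λ)·θ·ρ·Cy·Cx) + q2²·X̄²·Cx² − 2·q1·q2·Ȳ·X̄·Cx·(ρ·Cy − (1 + λ)·θ·Cx/2) ], and set q10 = 1/(1 + A) and q20 = q10·(Ȳ/(X̄·Cx))·(ρ·Cy − ((1 + λ)/2)·θ·Cx). If f1 > 0, Cy > 0, Cx > 0 and ρ² < 1, then for all real q1, q2 one has M(q1, q2) ≥ M(q10, q20); i.e. (q10, q20) is a global minimizer of the first-order mean squared error of the proposed estimator ȳ_λ. -/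
/-! The MSE splits as `Ȳ² ((q₁ - 1)² + A q₁²) + f₁ (q₁ Ȳ B - q₂ X̄ Cₓ)²` with
`B = ρ C_y - (1 + λ) θ Cₓ / 2`, because the coefficient of `q₁² Ȳ² f₁` is `B² + C_y² (1 - ρ²)`.
The second square vanishes at `q₂₀`, and the one-variable quadratic in `q₁` is minimized at
`1 / (1 + A)`, where `1 + A > 0` since `ρ² < 1`. -/

lemma sq_sub_one_add_mul_sq_eq {A : ℝ} (hA : 1 + A ≠ 0) (q : ℝ) :
    (q - 1) ^ 2 + A * q ^ 2 = (1 + A) * (q - 1 / (1 + A)) ^ 2 + A / (1 + A) := by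
  field_simp
  ring

lemma sq_sub_one_add_mul_sq_min {A : ℝ} (hA : 0 < 1 + A) (q : ℝ) :
    (1 / (1 + A) - 1) ^ 2 + A * (1 / (1 + A)) ^ 2 ≤ (q - 1) ^ 2 + A * q ^ 2 := by
  rw [sq_sub_one_add_mul_sq_eq hA.ne', sq_sub_one_add_mul_sq_eq hA.ne', sub_self]
  nlinarith [sq_nonneg (q - 1 / (1 + A))]

lemma mse_eq_add_sq (f1 Cy Cx θ lam ρ Ybar Xbar q1 q2 : ℝ) :
    Ybar ^ 2 * (q1 - 1) ^ 2 +
        f1 * (q1 ^ 2 * Ybar ^ 2 *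
            (Cy ^ 2 + θ ^ 2 * Cx ^ 2 * (1 + lam) ^ 2 / 4 - (1 + lam) * θ * ρ * Cy * Cx) +
          q2 ^ 2 * Xbar ^ 2 * Cx ^ 2 -
          2 * q1 * q2 * Ybar * Xbar * Cx * (ρ * Cy - (1 + lam) * θ * Cx / 2)) =
      Ybar ^ 2 * ((q1 - 1) ^ 2 + f1 * Cy ^ 2 * (1 - ρ ^ 2) * q1 ^ 2) +
        f1 * (q1 * Ybar * (ρ * Cy - (1 + lam) * θ * Cx / 2) - q2 * Xbar * Cx) ^ 2 := by
  ring

theorem proposed_weights_global_min_general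
    (f1 Cy Cx θ lam ρ Ybar Xbar A : ℝ)
    (hXbar : Xbar ≠ 0) (hCxne : Cx ≠ 0)
    (hA : A = f1 * Cy ^ 2 * (1 - ρ ^ 2))
    (M : ℝ × ℝ → ℝ)
    (hM : ∀ q1 q2 : ℝ, M (q1, q2) =
      Ybar ^ 2 * (q1 - 1) ^ 2 +
        f1 * (q1 ^ 2 * Ybar ^ 2 *
            (Cy ^ 2 + θ ^ 2 * Cx ^ 2 * (1 + lam) ^ 2 / 4 - (1 + lam) * θ * ρ * Cy * Cx) +
          q2 ^ 2 * Xbar ^ 2 * Cx ^ 2 -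
          2 * q1 * q2 * Ybar * Xbar * Cx * (ρ * Cy - (1 + lam) * θ * Cx / 2)))
    (q10 q20 : ℝ)
    (hq10 : q10 = 1 / (1 + A))
    (hq20 : q20 = q10 * (Ybar / (Xbar * Cx)) * (ρ * Cy - ((1 + lam) / 2) * θ * Cx))
    (hf1 : f1 > 0) (hρ : ρ ^ 2 < 1) :
    ∀ q1 q2 : ℝ, M (q1, q2) ≥ M (q10, q20) := by
  intro q1 q2
  have h1A : 0 < 1 + A := by
    have : 0 < 1 - ρ ^ 2 := sub_pos.2 hρ
    rw [hA]
    positivity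
  have hq20_residual : q10 * Ybar * (ρ * Cy - (1 + lam) * θ * Cx / 2) - q20 * Xbar * Cx = 0 := by
    rw [hq20]
    field_simp
    ring
  rw [hM, hM, mse_eq_add_sq, mse_eq_add_sq, ← hA, hq20_residual, hq10]
  have hq1 := mul_le_mul_of_nonneg_left (sq_sub_one_add_mul_sq_min h1A q1) (sq_nonneg Ybar)
  have hsq := mul_nonneg hf1.le
    (sq_nonneg (q1 * Ybar * (ρ * Cy - (1 + lam) * θ * Cx / 2) - q2 * Xbar * Cx))
  linarith

/-- The optimum weights (q10, q20) globally minimize the first-order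
MSE `M` of the proposed estimator ȳ_λ. -/
theorem proposed_weights_global_min
    (f1 Cy Cx θ lam ρ Ybar Xbar A : ℝ)
    (hXbar : Xbar ≠ 0) (hCxne : Cx ≠ 0)
    (hA : A = f1 * Cy ^ 2 * (1 - ρ ^ 2))
    (M : ℝ × ℝ → ℝ)
    (hM : ∀ q1 q2 : ℝ, M (q1, q2) =
      Ybar ^ 2 * (q1 - 1) ^ 2 +
        f1 * (q1 ^ 2 * Ybar ^ 2 *
            (Cy ^ 2 + θ ^ 2 * Cx ^ 2 * (1 + lam) ^ 2 / 4 - (1 + lam) * θ * ρ * Cy * Cx) +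
          q2 ^ 2 * Xbar ^ 2 * Cx ^ 2 -
          2 * q1 * q2 * Ybar * Xbar * Cx * (ρ * Cy - (1 + lam) * θ * Cx / 2)))
    (q10 q20 : ℝ)
    (hq10 : q10 = 1 / (1 + A))
    (hq20 : q20 = q10 * (Ybar / (Xbar * Cx)) * (ρ * Cy - ((1 + lam) / 2) * θ * Cx))
    (hf1 : f1 > 0) (hCy : Cy > 0) (hCx : Cx > 0) (hρ : ρ ^ 2 < 1) :
    ∀ q1 q2 : ℝ, M (q1, q2) ≥ M (q10, q20) :=
  proposed_weights_global_min_general f1 Cy Cx θ lam ρ Ybar Xbar A hXbar hCxne hA M hM q10 q20 hq10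
    hq20 hf1 hρ
end

section
/- Let f1, Cy, Cx, θ, λ, ρ, Ȳ, X̄ be real numbers with X̄ ≠ 0, Cx ≠ 0 and 1 + f1·Cy²·(1 − ρ²) ≠ 0, and set A = f1·Cy²·(1 − ρ²). Define M(q1, q2) = Ȳ²(q1 − 1)² + f1·[ q1²·Ȳ²·(Cy² + θ²Cx²(1 + λ)²/4 − (1 + λ)·θ·ρ·Cy·Cx) + q2²·X̄²·Cx² − 2·q1·q2·Ȳ·X̄·Cx·(ρ·Cy − (1 + λ)·θ·Cx/2) ], q10 = 1/(1 + A) and q20 = q10·(Ȳ/(X̄·Cx))·(ρ·Cy − ((1 + λ)/2)·θ·Cx). Then M(q10, q20) = f1·Ȳ²·Cy²·(1 − ρ²) / (1 + f1·Cy²·(1 − ρ²)), i.e. the value of the MSE at the optimum weights equals the expression in equation (24). -/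
/-! The bracket multiplying `q1 ^ 2 * Ybar ^ 2` equals `D ^ 2 + Cy ^ 2 * (1 - ρ ^ 2)` with
`D = ρ * Cy - (1 + λ) * θ * Cx / 2`, so completing the square in `q2` gives
`M (q1, q2) = Ybar ^ 2 * ((q1 - 1) ^ 2 + A * q1 ^ 2) + f1 * (q2 * Xbar * Cx - q1 * Ybar * D) ^ 2`.
The weight `q20` kills the last square, and `(q - 1) ^ 2 + A * q ^ 2` takes the value
`A / (1 + A)` at `q = 1 / (1 + A)`. -/

theorem mse_eq_completed_square (f1 Cy Cx θ lam ρ Ybar Xbar q1 q2 : ℝ) :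
    Ybar ^ 2 * (q1 - 1) ^ 2 +
        f1 * (q1 ^ 2 * Ybar ^ 2 *
            (Cy ^ 2 + θ ^ 2 * Cx ^ 2 * (1 + lam) ^ 2 / 4 - (1 + lam) * θ * ρ * Cy * Cx) +
          q2 ^ 2 * Xbar ^ 2 * Cx ^ 2 -
          2 * q1 * q2 * Ybar * Xbar * Cx * (ρ * Cy - (1 + lam) * θ * Cx / 2)) =
      Ybar ^ 2 * ((q1 - 1) ^ 2 + f1 * Cy ^ 2 * (1 - ρ ^ 2) * q1 ^ 2) +
        f1 * (q2 * Xbar * Cx - q1 * Ybar * (ρ * Cy - (1 + lam) * θ * Cx / 2)) ^ 2 := by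
  ring

theorem sq_sub_one_add_mul_sq_inv_one_add {A : ℝ} (hA : 1 + A ≠ 0) :
    (1 / (1 + A) - 1) ^ 2 + A * (1 / (1 + A)) ^ 2 = A / (1 + A) := by
  field_simp
  ring

/-- The value of the MSE at the optimum weights equals the minimum MSE
expression of equation (24). -/
theorem proposed_min_mse_value
    (f1 Cy Cx θ lam ρ Ybar Xbar A : ℝ)
    (hXbar : Xbar ≠ 0) (hCxne : Cx ≠ 0)
    (hden : 1 + f1 * Cy ^ 2 * (1 - ρ ^ 2) ≠ 0)
    (hA : A = f1 * Cy ^ 2 * (1 - ρ ^ 2))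
    (M : ℝ × ℝ → ℝ)
    (hM : ∀ q1 q2 : ℝ, M (q1, q2) =
      Ybar ^ 2 * (q1 - 1) ^ 2 +
        f1 * (q1 ^ 2 * Ybar ^ 2 *
            (Cy ^ 2 + θ ^ 2 * Cx ^ 2 * (1 + lam) ^ 2 / 4 - (1 + lam) * θ * ρ * Cy * Cx) +
          q2 ^ 2 * Xbar ^ 2 * Cx ^ 2 -
          2 * q1 * q2 * Ybar * Xbar * Cx * (ρ * Cy - (1 + lam) * θ * Cx / 2)))
    (q10 q20 : ℝ)
    (hq10 : q10 = 1 / (1 + A))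
    (hq20 : q20 = q10 * (Ybar / (Xbar * Cx)) * (ρ * Cy - ((1 + lam) / 2) * θ * Cx)) :
    M (q10, q20) =
      f1 * Ybar ^ 2 * Cy ^ 2 * (1 - ρ ^ 2) / (1 + f1 * Cy ^ 2 * (1 - ρ ^ 2)) := by
  have hq20_opt : q20 * Xbar * Cx - q10 * Ybar * (ρ * Cy - (1 + lam) * θ * Cx / 2) = 0 := by
    rw [hq20]
    field_simp
    ring
  subst hA
  rw [hM, mse_eq_completed_square, hq20_opt, hq10, sq_sub_one_add_mul_sq_inv_one_add hden]
  ring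
end

section
/- Let f1, Cy, Cx, θ, λ, ρ, Ȳ, X̄ be real numbers with f1 > 0, Cy > 0, Cx > 0, Ȳ ≠ 0, X̄ ≠ 0 and ρ² < 1, set A = f1·Cy²·(1 − ρ²), and define M(q1, q2) = Ȳ²(q1 − 1)² + f1·[ q1²·Ȳ²·(Cy² + θ²Cx²(1 + λ)²/4 − (1 + λ)·θ·ρ·Cy·Cx) + q2²·X̄²·Cx² − 2·q1·q2·Ȳ·X̄·Cx·(ρ·Cy − (1 + λ)·θ·Cx/2) ], q10 = 1/(1 + A) and q20 = q10·(Ȳ/(X̄·Cx))·(ρ·Cy − ((1 + λ)/2)·θ·Cx). If real numbers q1, q2 satisfy M(q1, q2) = M(q10, q20), then q1 = q10 and q2 = q20; that is, the optimum weights in equation (23) are the unique minimizer of the MSE. -/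
/-!
Completing the square in `q₂` turns `M` into
`Ȳ² ((q₁ - 1)² + A q₁²) + f₁ (q₁ Ȳ C - q₂ X̄ C_x)²` with `C = ρ C_y - (1 + λ) θ C_x / 2`,
and completing the square in `q₁` shows that
`M (q₁, q₂) - M (q₁₀, q₂₀) = (1 + A) Ȳ² (q₁ - q₁₀)² + f₁ ((q₁ - q₁₀) Ȳ C - (q₂ - q₂₀) X̄ C_x)²`.
Both weights `1 + A` and `f₁` are positive, so equality forces both squares to vanish.
-/

/-- `M` in the coordinates `u = q₁`, `v = q₂ X̄ C_x`, with `Y = Ȳ`, `f = f₁` and `c = C`. -/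
def canonicalMSE (Y f A c u v : ℝ) : ℝ :=
  Y ^ 2 * ((u - 1) ^ 2 + A * u ^ 2) + f * (u * Y * c - v) ^ 2

lemma eq_zero_and_eq_zero_of_mul_sq_add_mul_sq_eq_zero {a b x y : ℝ} (ha : 0 < a) (hb : 0 < b)
    (h : a * x ^ 2 + b * y ^ 2 = 0) : x = 0 ∧ y = 0 := by
  obtain ⟨hx, hy⟩ := (add_eq_zero_iff_of_nonneg (by positivity) (by positivity)).mp h
  exact ⟨pow_eq_zero_iff two_ne_zero |>.mp ((mul_eq_zero.mp hx).resolve_left ha.ne'),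
    pow_eq_zero_iff two_ne_zero |>.mp ((mul_eq_zero.mp hy).resolve_left hb.ne')⟩

lemma canonicalMSE_sub_canonicalMSE_min {Y f A : ℝ} (c u v : ℝ) (hA : 1 + A ≠ 0) :
    canonicalMSE Y f A c u v - canonicalMSE Y f A c (1 + A)⁻¹ ((1 + A)⁻¹ * Y * c) =
      (1 + A) * (Y * (u - (1 + A)⁻¹)) ^ 2 +
        f * ((u - (1 + A)⁻¹) * Y * c - (v - (1 + A)⁻¹ * Y * c)) ^ 2 := by
  unfold canonicalMSE
  field_simp
  ring

lemma eq_of_canonicalMSE_eq_min {Y f A c u v : ℝ} (hA : 0 < 1 + A) (hY : Y ≠ 0) (hf : 0 < f)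
    (h : canonicalMSE Y f A c u v = canonicalMSE Y f A c (1 + A)⁻¹ ((1 + A)⁻¹ * Y * c)) :
    u = (1 + A)⁻¹ ∧ v = (1 + A)⁻¹ * Y * c := by
  have hsq := canonicalMSE_sub_canonicalMSE_min (Y := Y) (f := f) c u v hA.ne'
  rw [h, sub_self] at hsq
  obtain ⟨hu, hv⟩ := eq_zero_and_eq_zero_of_mul_sq_add_mul_sq_eq_zero hA hf hsq.symm
  have hu : u = (1 + A)⁻¹ := sub_eq_zero.mp ((mul_eq_zero.mp hu).resolve_left hY)
  rw [hu, sub_self, zero_mul, zero_mul, zero_sub, neg_eq_zero] at hv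
  exact ⟨hu, sub_eq_zero.mp hv⟩

theorem proposed_weights_unique_min_general
    (f1 Cy Cx θ lam ρ Ybar Xbar A : ℝ)
    (hf1 : f1 > 0) (hCx : Cx > 0)
    (hYbar : Ybar ≠ 0) (hXbar : Xbar ≠ 0) (hρ : ρ ^ 2 < 1)
    (hA : A = f1 * Cy ^ 2 * (1 - ρ ^ 2))
    (M : ℝ × ℝ → ℝ)
    (hM : ∀ q1 q2 : ℝ, M (q1, q2) =
      Ybar ^ 2 * (q1 - 1) ^ 2 +
        f1 * (q1 ^ 2 * Ybar ^ 2 *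
            (Cy ^ 2 + θ ^ 2 * Cx ^ 2 * (1 + lam) ^ 2 / 4 - (1 + lam) * θ * ρ * Cy * Cx) +
          q2 ^ 2 * Xbar ^ 2 * Cx ^ 2 -
          2 * q1 * q2 * Ybar * Xbar * Cx * (ρ * Cy - (1 + lam) * θ * Cx / 2)))
    (q10 q20 : ℝ)
    (hq10 : q10 = 1 / (1 + A))
    (hq20 : q20 = q10 * (Ybar / (Xbar * Cx)) * (ρ * Cy - ((1 + lam) / 2) * θ * Cx))
    (q1 q2 : ℝ) (heq : M (q1, q2) = M (q10, q20)) :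
    q1 = q10 ∧ q2 = q20 := by
  set C := ρ * Cy - (1 + lam) / 2 * θ * Cx
  have hA_pos : 0 < 1 + A := by
    have : 0 < 1 - ρ ^ 2 := by linarith
    rw [hA]
    positivity
  have hM_canonical : ∀ q1 q2, M (q1, q2) = canonicalMSE Ybar f1 A C q1 (q2 * Xbar * Cx) := by
    intro q1 q2
    rw [hM, hA, canonicalMSE]
    ring
  have hXC : Xbar * Cx ≠ 0 := mul_ne_zero hXbar hCx.ne'
  have hq20_scaled : q20 * Xbar * Cx = q10 * Ybar * C := by
    rw [hq20]; field_simp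
  rw [hM_canonical, hM_canonical, hq20_scaled, hq10, one_div] at heq
  obtain ⟨hq1, hq2⟩ := eq_of_canonicalMSE_eq_min hA_pos hYbar hf1 heq
  rw [← one_div, ← hq10, ← hq20_scaled, mul_assoc, mul_assoc] at hq2
  exact ⟨hq1.trans (by rw [hq10, one_div]), mul_right_cancel₀ hXC hq2⟩

/-- The optimum weights of equation (23) are the unique minimizer of
the MSE `M`. -/
theorem proposed_weights_unique_min
    (f1 Cy Cx θ lam ρ Ybar Xbar A : ℝ)
    (hf1 : f1 > 0) (hCy : Cy > 0) (hCx : Cx > 0)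
    (hYbar : Ybar ≠ 0) (hXbar : Xbar ≠ 0) (hρ : ρ ^ 2 < 1)
    (hA : A = f1 * Cy ^ 2 * (1 - ρ ^ 2))
    (M : ℝ × ℝ → ℝ)
    (hM : ∀ q1 q2 : ℝ, M (q1, q2) =
      Ybar ^ 2 * (q1 - 1) ^ 2 +
        f1 * (q1 ^ 2 * Ybar ^ 2 *
            (Cy ^ 2 + θ ^ 2 * Cx ^ 2 * (1 + lam) ^ 2 / 4 - (1 + lam) * θ * ρ * Cy * Cx) +
          q2 ^ 2 * Xbar ^ 2 * Cx ^ 2 -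
          2 * q1 * q2 * Ybar * Xbar * Cx * (ρ * Cy - (1 + lam) * θ * Cx / 2)))
    (q10 q20 : ℝ)
    (hq10 : q10 = 1 / (1 + A))
    (hq20 : q20 = q10 * (Ybar / (Xbar * Cx)) * (ρ * Cy - ((1 + lam) / 2) * θ * Cx))
    (q1 q2 : ℝ) (heq : M (q1, q2) = M (q10, q20)) :
    q1 = q10 ∧ q2 = q20 :=
  proposed_weights_unique_min_general f1 Cy Cx θ lam ρ Ybar Xbar A hf1 hCx hYbar hXbar hρ hA M hM
    q10 q20 hq10 hq20 q1 q2 heq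
end

section
/- Let f1, Cy, Cx, θ, λ, ρ, Ȳ, X̄ be real numbers with X̄ ≠ 0, Cx ≠ 0 and 1 + f1·Cy²·(1 − ρ²) ≠ 0, set A = f1·Cy²·(1 − ρ²), and define M(q1, q2) = Ȳ²(q1 − 1)² + f1·[ q1²·Ȳ²·(Cy² + θ²Cx²(1 + λ)²/4 − (1 + λ)·θ·ρ·Cy·Cx) + q2²·X̄²·Cx² − 2·q1·q2·Ȳ·X̄·Cx·(ρ·Cy − (1 + λ)·θ·Cx/2) ], q10 = 1/(1 + A) and q20 = q10·(Ȳ/(X̄·Cx))·(ρ·Cy − ((1 + λ)/2)·θ·Cx). Then (q10, q20) is a critical point of M: the derivative of q1 ↦ M(q1, q20) at q10 is zero, and the derivative of q2 ↦ M(q10, q2) at q20 is zero. -/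
/-!
Writing `K = ρ Cy - (1 + λ) θ Cx / 2` and `C = Cy² (1 - ρ²)`, the bracket in `M` completes to
`(q1 Ȳ K - q2 X̄ Cx)² + q1² Ȳ² C`, so `M` is a squared bias plus `f1` times a variance.
The `q2`-derivative vanishes where the square does, on the line `q2 X̄ Cx = q1 Ȳ K` that
defines `q20`; on that line the `q1`-derivative is `2 Ȳ² (q1 (1 + f1 C) - 1)`, which vanishes at
`q10 = 1 / (1 + A)`.
-/

def weightedMSE (f1 u v a c q1 q2 : ℝ) : ℝ :=
  u ^ 2 * (q1 - 1) ^ 2 + f1 * ((q1 * a - q2 * v) ^ 2 + q1 ^ 2 * c)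

section weightedMSE

variable (f1 u v a c q1 q2 : ℝ)

theorem hasDerivAt_weightedMSE_left :
    HasDerivAt (fun q1 => weightedMSE f1 u v a c q1 q2)
      (2 * (u ^ 2 * (q1 - 1) + f1 * (a * (q1 * a - q2 * v) + q1 * c))) q1 := by
  have hbias := (((hasDerivAt_id' q1).sub_const 1).fun_pow 2).const_mul (u ^ 2)
  have hvar := ((((hasDerivAt_id' q1).mul_const a).sub_const (q2 * v)).fun_pow 2).add
    (((hasDerivAt_id' q1).fun_pow 2).mul_const c)
  exact (hbias.add (hvar.const_mul f1)).congr_deriv (by ring)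

theorem hasDerivAt_weightedMSE_right :
    HasDerivAt (fun q2 => weightedMSE f1 u v a c q1 q2) (-2 * f1 * v * (q1 * a - q2 * v)) q2 := by
  have hvar := ((((hasDerivAt_id' q2).mul_const v).const_sub (q1 * a)).fun_pow 2).add_const
    (q1 ^ 2 * c)
  exact ((hvar.const_mul f1).const_add (u ^ 2 * (q1 - 1) ^ 2)).congr_deriv (by ring)

variable {f1 u v a c q1 q2}

theorem deriv_weightedMSE_left_eq_zero (hbal : q2 * v = q1 * a)
    (hq1 : q1 * (u ^ 2 + f1 * c) = u ^ 2) :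
    deriv (fun q1 => weightedMSE f1 u v a c q1 q2) q1 = 0 := by
  rw [(hasDerivAt_weightedMSE_left f1 u v a c q1 q2).deriv, hbal]
  linear_combination 2 * hq1

theorem deriv_weightedMSE_right_eq_zero (hbal : q2 * v = q1 * a) :
    deriv (fun q2 => weightedMSE f1 u v a c q1 q2) q2 = 0 := by
  rw [(hasDerivAt_weightedMSE_right f1 u v a c q1 q2).deriv, hbal, sub_self, mul_zero]

end weightedMSE

/-- (q10, q20) is a critical point of the MSE `M`: both partial
derivatives vanish there. -/
theorem proposed_weights_critical_point
    (f1 Cy Cx θ lam ρ Ybar Xbar A : ℝ)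
    (hXbar : Xbar ≠ 0) (hCxne : Cx ≠ 0)
    (hden : 1 + f1 * Cy ^ 2 * (1 - ρ ^ 2) ≠ 0)
    (hA : A = f1 * Cy ^ 2 * (1 - ρ ^ 2))
    (M : ℝ × ℝ → ℝ)
    (hM : ∀ q1 q2 : ℝ, M (q1, q2) =
      Ybar ^ 2 * (q1 - 1) ^ 2 +
        f1 * (q1 ^ 2 * Ybar ^ 2 *
            (Cy ^ 2 + θ ^ 2 * Cx ^ 2 * (1 + lam) ^ 2 / 4 - (1 + lam) * θ * ρ * Cy * Cx) +
          q2 ^ 2 * Xbar ^ 2 * Cx ^ 2 -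
          2 * q1 * q2 * Ybar * Xbar * Cx * (ρ * Cy - (1 + lam) * θ * Cx / 2)))
    (q10 q20 : ℝ)
    (hq10 : q10 = 1 / (1 + A))
    (hq20 : q20 = q10 * (Ybar / (Xbar * Cx)) * (ρ * Cy - ((1 + lam) / 2) * θ * Cx)) :
    deriv (fun q1 : ℝ => M (q1, q20)) q10 = 0 ∧
      deriv (fun q2 : ℝ => M (q10, q2)) q20 = 0 := by
  have hM_eq : ∀ q1 q2, M (q1, q2) = weightedMSE f1 Ybar (Xbar * Cx)
      (Ybar * (ρ * Cy - ((1 + lam) / 2) * θ * Cx)) (Ybar ^ 2 * (Cy ^ 2 * (1 - ρ ^ 2))) q1 q2 := by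
    intro q1 q2
    rw [hM, weightedMSE]
    ring
  have hbal : q20 * (Xbar * Cx) = q10 * (Ybar * (ρ * Cy - ((1 + lam) / 2) * θ * Cx)) := by
    rw [hq20]
    field_simp
  have hq1 : q10 * (Ybar ^ 2 + f1 * (Ybar ^ 2 * (Cy ^ 2 * (1 - ρ ^ 2)))) = Ybar ^ 2 := by
    rw [hq10, hA]
    field_simp
  simp only [hM_eq]
  exact ⟨deriv_weightedMSE_left_eq_zero hbal hq1, deriv_weightedMSE_right_eq_zero hbal⟩
end

section
/- Let f1, Cy, Cx, θ, λ, ρ, Ȳ, X̄ be real numbers with f1 > 0, Cy > 0, Cx > 0, Ȳ ≠ 0, X̄ ≠ 0 and ρ² < 1. Then the function M : ℝ × ℝ → ℝ given by M(q1, q2) = Ȳ²(q1 − 1)² + f1·[ q1²·Ȳ²·(Cy² + θ²Cx²(1 + λ)²/4 − (1 + λ)·θ·ρ·Cy·Cx) + q2²·X̄²·Cx² − 2·q1·q2·Ȳ·X̄·Cx·(ρ·Cy − (1 + λ)·θ·Cx/2) ] is strictly convex on ℝ². -/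
/-!
`M` is a quadratic polynomial in `(q₁, q₂)`, so it is strictly convex as soon as its quadratic
part is positive definite. Completing the square with `D = ρ Cy - (1 + λ) θ Cx / 2`, the
coefficient of `q₁² Ȳ²` in the bracket is `D² + Cy² (1 - ρ²) ≥ 0`, and the determinant of the
quadratic part is `f₁ Ȳ² X̄² Cx² (1 + f₁ Cy² (1 - ρ²)) > 0`.
-/

open QuadraticMap

section ConvexCombination

variable {𝕜 E : Type*} [CommRing 𝕜] [AddCommGroup E] [Module 𝕜 E]

theorem QuadraticMap.mul_add_mul_sub_map_smul_add_smul (Q : QuadraticMap 𝕜 E 𝕜) (x y : E)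
    {a b : 𝕜} (hab : a + b = 1) :
    a * Q x + b * Q y - Q (a • x + b • y) = a * b * Q (x - y) := by
  have hcomb : Q (a • x + b • y) = a * a * Q x + b * b * Q y + a * b * polar Q x y := by
    rw [QuadraticMap.map_add (⇑Q), QuadraticMap.map_smul, QuadraticMap.map_smul,
      polar_smul_left, polar_smul_right, smul_eq_mul, smul_eq_mul, smul_eq_mul, smul_eq_mul]
    ring
  have hdiff : Q (x - y) = Q x + Q y - polar Q x y := by
    rw [sub_eq_add_neg, QuadraticMap.map_add (⇑Q), QuadraticMap.map_neg, polar_neg_right]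
    ring
  rw [hcomb, hdiff]
  linear_combination (-(a * Q x + b * Q y)) * hab

theorem QuadraticMap.PosDef.strictConvexOn [LinearOrder 𝕜] [IsStrictOrderedRing 𝕜]
    {Q : QuadraticMap 𝕜 E 𝕜} (hQ : Q.PosDef) : StrictConvexOn 𝕜 Set.univ Q := by
  refine ⟨convex_univ, fun x _ y _ hxy a b ha hb hab => ?_⟩
  have hgap := Q.mul_add_mul_sub_map_smul_add_smul x y hab
  have hpos : 0 < a * b * Q (x - y) := mul_pos (mul_pos ha hb) (hQ _ (sub_ne_zero.2 hxy))
  simp only [smul_eq_mul]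
  linarith

end ConvexCombination

section BinaryQuadraticForm

variable {𝕜 : Type*} [CommRing 𝕜]

def binaryQuadraticForm (a b c : 𝕜) : QuadraticMap 𝕜 (𝕜 × 𝕜) 𝕜 :=
  a • linMulLin (LinearMap.fst 𝕜 𝕜 𝕜) (LinearMap.fst 𝕜 𝕜 𝕜) +
    (2 * b) • linMulLin (LinearMap.fst 𝕜 𝕜 𝕜) (LinearMap.snd 𝕜 𝕜 𝕜) +
    c • linMulLin (LinearMap.snd 𝕜 𝕜 𝕜) (LinearMap.snd 𝕜 𝕜 𝕜)

@[simp]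
theorem binaryQuadraticForm_apply (a b c : 𝕜) (q : 𝕜 × 𝕜) :
    binaryQuadraticForm a b c q = a * q.1 ^ 2 + 2 * b * q.1 * q.2 + c * q.2 ^ 2 := by
  simp only [binaryQuadraticForm, add_apply, smul_apply, linMulLin_apply, LinearMap.fst_apply,
    LinearMap.snd_apply, smul_eq_mul]
  ring

theorem binaryQuadraticForm_posDef [LinearOrder 𝕜] [IsStrictOrderedRing 𝕜] {a b c : 𝕜}
    (ha : 0 < a) (hdisc : b ^ 2 < a * c) : (binaryQuadraticForm a b c).PosDef := by
  rintro ⟨u, v⟩ huv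
  have hsq : a * binaryQuadraticForm a b c (u, v) =
      (a * u + b * v) ^ 2 + (a * c - b ^ 2) * v ^ 2 := by
    rw [binaryQuadraticForm_apply]
    ring
  refine pos_of_mul_pos_right (hsq ▸ ?_) ha.le
  rcases eq_or_ne v 0 with rfl | hv
  · have hu : u ≠ 0 := fun hu => huv (by simp [hu])
    simpa using sq_pos_of_ne_zero (mul_ne_zero ha.ne' hu)
  · have : 0 < (a * c - b ^ 2) * v ^ 2 := mul_pos (sub_pos.2 hdisc) (by positivity)
    positivity

end BinaryQuadraticForm

theorem mse_strictly_convex_general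
    (f1 Cy Cx θ lam ρ Ybar Xbar : ℝ)
    (hf1 : f1 > 0) (hCx : Cx > 0)
    (hYbar : Ybar ≠ 0) (hXbar : Xbar ≠ 0) (hρ : ρ ^ 2 < 1) :
    StrictConvexOn ℝ (Set.univ : Set (ℝ × ℝ)) (fun q : ℝ × ℝ =>
      Ybar ^ 2 * (q.1 - 1) ^ 2 +
        f1 * (q.1 ^ 2 * Ybar ^ 2 *
            (Cy ^ 2 + θ ^ 2 * Cx ^ 2 * (1 + lam) ^ 2 / 4 - (1 + lam) * θ * ρ * Cy * Cx) +
          q.2 ^ 2 * Xbar ^ 2 * Cx ^ 2 -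
          2 * q.1 * q.2 * Ybar * Xbar * Cx * (ρ * Cy - (1 + lam) * θ * Cx / 2))) := by
  set D := ρ * Cy - (1 + lam) * θ * Cx / 2
  set K := Cy ^ 2 + θ ^ 2 * Cx ^ 2 * (1 + lam) ^ 2 / 4 - (1 + lam) * θ * ρ * Cy * Cx
  have hK : K = D ^ 2 + Cy ^ 2 * (1 - ρ ^ 2) := by ring
  have hρ' : 0 < 1 - ρ ^ 2 := sub_pos.2 hρ
  have ha : 0 < Ybar ^ 2 * (1 + f1 * K) := by rw [hK]; positivity
  have hdisc : (-(f1 * Ybar * Xbar * Cx * D)) ^ 2 <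
      Ybar ^ 2 * (1 + f1 * K) * (f1 * Xbar ^ 2 * Cx ^ 2) := by
    have hdet : Ybar ^ 2 * (1 + f1 * K) * (f1 * Xbar ^ 2 * Cx ^ 2) -
        (-(f1 * Ybar * Xbar * Cx * D)) ^ 2 =
        f1 * Ybar ^ 2 * Xbar ^ 2 * Cx ^ 2 * (1 + f1 * Cy ^ 2 * (1 - ρ ^ 2)) := by
      rw [hK]
      ring
    have : 0 < f1 * Ybar ^ 2 * Xbar ^ 2 * Cx ^ 2 * (1 + f1 * Cy ^ 2 * (1 - ρ ^ 2)) := by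
      positivity
    linarith
  have hlinear := ((-2 * Ybar ^ 2) • LinearMap.fst ℝ ℝ ℝ).convexOn convex_univ
  refine (((binaryQuadraticForm_posDef ha hdisc).strictConvexOn.add_convexOn hlinear).add_const
    (Ybar ^ 2)).congr fun q _ => ?_
  simp only [Pi.add_apply, binaryQuadraticForm_apply, LinearMap.smul_apply, LinearMap.fst_apply,
    smul_eq_mul]
  ring

/-- The MSE function `M` is strictly convex on ℝ². -/
theorem mse_strictly_convex
    (f1 Cy Cx θ lam ρ Ybar Xbar : ℝ)
    (hf1 : f1 > 0) (hCy : Cy > 0) (hCx : Cx > 0)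
    (hYbar : Ybar ≠ 0) (hXbar : Xbar ≠ 0) (hρ : ρ ^ 2 < 1) :
    StrictConvexOn ℝ (Set.univ : Set (ℝ × ℝ)) (fun q : ℝ × ℝ =>
      Ybar ^ 2 * (q.1 - 1) ^ 2 +
        f1 * (q.1 ^ 2 * Ybar ^ 2 *
            (Cy ^ 2 + θ ^ 2 * Cx ^ 2 * (1 + lam) ^ 2 / 4 - (1 + lam) * θ * ρ * Cy * Cx) +
          q.2 ^ 2 * Xbar ^ 2 * Cx ^ 2 -
          2 * q.1 * q.2 * Ybar * Xbar * Cx * (ρ * Cy - (1 + lam) * θ * Cx / 2))) :=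
  mse_strictly_convex_general f1 Cy Cx θ lam ρ Ybar Xbar hf1 hCx hYbar hXbar hρ
end

section
/- Let f1, Cy, Ȳ, ρ be real numbers with f1 ≥ 0 and ρ² ≤ 1, and set A = f1·Cy²·(1 − ρ²). Then f1·Ȳ²·Cy² − f1·Ȳ²·Cy²·(1 − ρ²)/(1 + A) = f1·Ȳ²·Cy²·(A + ρ²)/(1 + A), and in particular f1·Ȳ²·Cy² ≥ f1·Ȳ²·Cy²·(1 − ρ²)/(1 + A); that is, the mean squared error of the sample mean estimator is always at least the minimum MSE of the proposed estimator ȳ_λ. -/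
/-! Writing `m = f1·Ȳ²·Cy²` and `A = f1·Cy²·(1 − ρ²) ≥ 0`, the gap `m − m(1 − ρ²)/(1 + A)` equals
`m(A + ρ²)/(1 + A)`, a quotient of nonnegative quantities by a positive one. -/

lemma sub_mul_one_sub_div_one_add {K : Type*} [Field K] (m r A : K) (hA : 1 + A ≠ 0) :
    m - m * (1 - r) / (1 + A) = m * (A + r) / (1 + A) := by
  field_simp
  ring

lemma sub_mul_one_sub_div_one_add_nonneg {m r A : ℝ} (hm : 0 ≤ m) (hr : 0 ≤ r) (hA : 0 ≤ A) :
    0 ≤ m - m * (1 - r) / (1 + A) := by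
  rw [sub_mul_one_sub_div_one_add m r A (by positivity)]
  positivity

/-- The MSE of the sample mean estimator is at least the minimum MSE of
the proposed estimator ȳ_λ. -/
theorem sample_mean_vs_proposed
    (f1 Cy Ybar ρ A : ℝ) (hf1 : f1 ≥ 0) (hρ : ρ ^ 2 ≤ 1)
    (hA : A = f1 * Cy ^ 2 * (1 - ρ ^ 2)) :
    f1 * Ybar ^ 2 * Cy ^ 2 - f1 * Ybar ^ 2 * Cy ^ 2 * (1 - ρ ^ 2) / (1 + A) =
        f1 * Ybar ^ 2 * Cy ^ 2 * (A + ρ ^ 2) / (1 + A) ∧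
      f1 * Ybar ^ 2 * Cy ^ 2 ≥ f1 * Ybar ^ 2 * Cy ^ 2 * (1 - ρ ^ 2) / (1 + A) := by
  have hA0 : 0 ≤ A := hA ▸ mul_nonneg (by positivity) (sub_nonneg.mpr hρ)
  have hm : 0 ≤ f1 * Ybar ^ 2 * Cy ^ 2 := by positivity
  exact ⟨sub_mul_one_sub_div_one_add _ _ _ (by positivity),
    sub_nonneg.mp (sub_mul_one_sub_div_one_add_nonneg hm (sq_nonneg ρ) hA0)⟩
end

section
/- Let f1, Cy, Cx, Ȳ, ρ be real numbers with f1 ≥ 0 and ρ² ≤ 1, and set A = f1·Cy²·(1 − ρ²). Then f1·Ȳ²·(Cy² + Cx² − 2·ρ·Cy·Cx) ≥ f1·Ȳ²·Cy²·(1 − ρ²)/(1 + A); that is, the mean squared error of the usual ratio estimator is always at least the minimum MSE of the proposed estimator ȳ_λ (condition (26) is always satisfied). -/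
/-! The ratio-estimator MSE exceeds `f1 Ȳ² Cy² (1 - ρ²)` by `f1 Ȳ² (Cx - ρ Cy)²`, and dividing
the nonnegative quantity `f1 Ȳ² Cy² (1 - ρ²)` by `1 + A ≥ 1` can only decrease it. -/

theorem mul_one_sub_sq_le_sq_add_sq_sub (ρ Cy Cx : ℝ) :
    Cy ^ 2 * (1 - ρ ^ 2) ≤ Cy ^ 2 + Cx ^ 2 - 2 * ρ * Cy * Cx := by
  nlinarith [sq_nonneg (Cx - ρ * Cy)]

/-- The MSE of the usual ratio estimator is at least the minimum MSE of
the proposed estimator ȳ_λ (condition (26) is always satisfied). -/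
theorem ratio_vs_proposed
    (f1 Cy Cx Ybar ρ A : ℝ) (hf1 : f1 ≥ 0) (hρ : ρ ^ 2 ≤ 1)
    (hA : A = f1 * Cy ^ 2 * (1 - ρ ^ 2)) :
    f1 * Ybar ^ 2 * (Cy ^ 2 + Cx ^ 2 - 2 * ρ * Cy * Cx) ≥
      f1 * Ybar ^ 2 * Cy ^ 2 * (1 - ρ ^ 2) / (1 + A) := by
  have hscale : 0 ≤ f1 * Ybar ^ 2 := by positivity
  have hvar : 0 ≤ Cy ^ 2 * (1 - ρ ^ 2) := mul_nonneg (sq_nonneg Cy) (by linarith)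
  have hA0 : 0 ≤ A := by rw [hA, mul_assoc]; exact mul_nonneg hf1 hvar
  calc f1 * Ybar ^ 2 * Cy ^ 2 * (1 - ρ ^ 2) / (1 + A)
      = f1 * Ybar ^ 2 * (Cy ^ 2 * (1 - ρ ^ 2)) / (1 + A) := by rw [mul_assoc _ (Cy ^ 2)]
    _ ≤ f1 * Ybar ^ 2 * (Cy ^ 2 * (1 - ρ ^ 2)) :=
        div_le_self (mul_nonneg hscale hvar) (by linarith)
    _ ≤ f1 * Ybar ^ 2 * (Cy ^ 2 + Cx ^ 2 - 2 * ρ * Cy * Cx) :=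
        mul_le_mul_of_nonneg_left (mul_one_sub_sq_le_sq_add_sq_sub ρ Cy Cx) hscale
end

section
/- Let f1, Cy, Cx, Ȳ, ρ be real numbers with f1 ≥ 0 and ρ² ≤ 1, and set A = f1·Cy²·(1 − ρ²). Then f1·Ȳ²·(Cy² + Cx²/4 − ρ·Cy·Cx) ≥ f1·Ȳ²·Cy²·(1 − ρ²)/(1 + A); that is, the mean squared error of the Bahl–Tuteja exponential ratio-type estimator is always at least the minimum MSE of the proposed estimator ȳ_λ (condition (27) is always satisfied). -/
/-! The gap between the two bracketed factors is a perfect square,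
`Cy² + Cx²/4 − ρCyCx − Cy²(1 − ρ²) = (ρCy − Cx/2)²`, so the Bahl–Tuteja MSE dominates
`f1·Ȳ²·Cy²·(1 − ρ²)`, the MSE of the regression estimator. Since `ρ² ≤ 1` this quantity
and `A` are nonnegative, and dividing by `1 + A ≥ 1` can only decrease it. -/

theorem sq_mul_one_sub_sq_le (Cy Cx ρ : ℝ) :
    Cy ^ 2 * (1 - ρ ^ 2) ≤ Cy ^ 2 + Cx ^ 2 / 4 - ρ * Cy * Cx := by
  have gap : Cy ^ 2 + Cx ^ 2 / 4 - ρ * Cy * Cx = Cy ^ 2 * (1 - ρ ^ 2) + (ρ * Cy - Cx / 2) ^ 2 := by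
    ring
  rw [gap]
  exact le_add_of_nonneg_right (sq_nonneg _)

/-- The MSE of the Bahl–Tuteja exponential ratio-type estimator is at
least the minimum MSE of the proposed estimator ȳ_λ (condition (27)). -/
theorem exponential_ratio_vs_proposed
    (f1 Cy Cx Ybar ρ A : ℝ) (hf1 : f1 ≥ 0) (hρ : ρ ^ 2 ≤ 1)
    (hA : A = f1 * Cy ^ 2 * (1 - ρ ^ 2)) :
    f1 * Ybar ^ 2 * (Cy ^ 2 + Cx ^ 2 / 4 - ρ * Cy * Cx) ≥
      f1 * Ybar ^ 2 * Cy ^ 2 * (1 - ρ ^ 2) / (1 + A) := by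
  have hρ' : 0 ≤ 1 - ρ ^ 2 := sub_nonneg.mpr hρ
  have hA0 : 0 ≤ A := hA ▸ by positivity
  calc f1 * Ybar ^ 2 * Cy ^ 2 * (1 - ρ ^ 2) / (1 + A)
      ≤ f1 * Ybar ^ 2 * Cy ^ 2 * (1 - ρ ^ 2) :=
        div_le_self (by positivity) (le_add_of_nonneg_right hA0)
    _ = f1 * Ybar ^ 2 * (Cy ^ 2 * (1 - ρ ^ 2)) := by ring
    _ ≤ f1 * Ybar ^ 2 * (Cy ^ 2 + Cx ^ 2 / 4 - ρ * Cy * Cx) :=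
        mul_le_mul_of_nonneg_left (sq_mul_one_sub_sq_le Cy Cx ρ) (by positivity)
end

section
/- Let f1, Cy, Ȳ, ρ be real numbers with 1 + f1·Cy²·(1 − ρ²) > 0, and set A = f1·Cy²·(1 − ρ²). Then f1·Ȳ²·Cy²·(1 − ρ²) − f1·Ȳ²·Cy²·(1 − ρ²)/(1 + A) = (f1·Ȳ·Cy²·(1 − ρ²))²/(1 + A), and in particular f1·Ȳ²·Cy²·(1 − ρ²) ≥ f1·Ȳ²·Cy²·(1 − ρ²)/(1 + A); that is, the MSE of the linear regression estimator (equal to the minimum MSEs of the Khosnevisan et al. and Singh et al. estimators) is always at least the minimum MSE of the proposed estimator ȳ_λ (condition (30) is always satisfied). -/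
/-! With M = f1 Ȳ² Cy² (1 − ρ²) and A = f1 Cy² (1 − ρ²), the gap M − M/(1 + A) equals
M·A/(1 + A), and M·A = (f1 Ȳ Cy² (1 − ρ²))² is a perfect square, so the gap is a square
over a positive denominator. -/

theorem sub_div_one_add_eq_mul_div {K : Type*} [Field K] (m a : K) (h : 1 + a ≠ 0) :
    m - m / (1 + a) = m * a / (1 + a) := by
  field_simp
  ring

/-- The MSE of the linear regression estimator is at least the minimum
MSE of the proposed estimator ȳ_λ (condition (30)). -/
theorem regression_vs_proposed
    (f1 Cy Ybar ρ A : ℝ)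
    (hden : 1 + f1 * Cy ^ 2 * (1 - ρ ^ 2) > 0)
    (hA : A = f1 * Cy ^ 2 * (1 - ρ ^ 2)) :
    f1 * Ybar ^ 2 * Cy ^ 2 * (1 - ρ ^ 2) -
          f1 * Ybar ^ 2 * Cy ^ 2 * (1 - ρ ^ 2) / (1 + A) =
        (f1 * Ybar * Cy ^ 2 * (1 - ρ ^ 2)) ^ 2 / (1 + A) ∧
      f1 * Ybar ^ 2 * Cy ^ 2 * (1 - ρ ^ 2) ≥
        f1 * Ybar ^ 2 * Cy ^ 2 * (1 - ρ ^ 2) / (1 + A) := by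
  subst hA
  have gap : f1 * Ybar ^ 2 * Cy ^ 2 * (1 - ρ ^ 2) -
        f1 * Ybar ^ 2 * Cy ^ 2 * (1 - ρ ^ 2) / (1 + f1 * Cy ^ 2 * (1 - ρ ^ 2)) =
      (f1 * Ybar * Cy ^ 2 * (1 - ρ ^ 2)) ^ 2 / (1 + f1 * Cy ^ 2 * (1 - ρ ^ 2)) := by
    rw [sub_div_one_add_eq_mul_div _ _ hden.ne']
    ring
  refine ⟨gap, sub_nonneg.mp ?_⟩
  rw [gap]
  positivity
end
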